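/- arXiv:2201.01270 — 10 statements merged into one kernel-verified Lean document; each statement's English description precedes it below -/
import Mathlib

section
/- (Muirhead's inequality in two variables.) Let a₁, a₂, b₁, b₂ be nonnegative real numbers such that a₂ < b₂ ≤ b₁ < a₁ and b₁ + b₂ = a₁ + a₂. If x₁ and x₂ are positive real numbers with x₁ ≠ x₂, then x₁^(b₁) · x₂^(b₂) + x₁^(b₂) · x₂^(b₁) < x₁^(a₁) · x₂^(a₂) + x₁^(a₂) · x₂^(a₁). -/
theorem stmt_2 (a₁ a₂ b₁ b₂ x₁ x₂ : ℝ)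
    (ha₂ : 0 ≤ a₂) (h1 : a₂ < b₂) (h2 : b₂ ≤ b₁) (h3 : b₁ < a₁)
    (hsum : b₁ + b₂ = a₁ + a₂)
    (hx₁ : 0 < x₁) (hx₂ : 0 < x₂) (hne : x₁ ≠ x₂) :
    x₁ ^ b₁ * x₂ ^ b₂ + x₁ ^ b₂ * x₂ ^ b₁
      < x₁ ^ a₁ * x₂ ^ a₂ + x₁ ^ a₂ * x₂ ^ a₁ := by
  have hp : 0 < b₁ - a₂ := by linarith
  have hq : 0 < b₂ - a₂ := by linarith
  have hfac : 0 < (x₁ ^ (b₁ - a₂) - x₂ ^ (b₁ - a₂)) *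
      (x₁ ^ (b₂ - a₂) - x₂ ^ (b₂ - a₂)) := by
    rcases lt_or_gt_of_ne hne with h | h
    · apply mul_pos_of_neg_of_neg <;> rw [sub_neg] <;>
        exact Real.rpow_lt_rpow hx₁.le h (by linarith)
    · apply mul_pos <;> rw [sub_pos] <;>
        exact Real.rpow_lt_rpow hx₂.le h (by linarith)
  have hmul := mul_pos hfac
    (mul_pos (Real.rpow_pos_of_pos hx₁ a₂) (Real.rpow_pos_of_pos hx₂ a₂))
  have e1 : x₁ ^ (b₁ - a₂) * x₁ ^ a₂ = x₁ ^ b₁ := by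
    rw [← Real.rpow_add hx₁]; ring_nf
  have e2 : x₂ ^ (b₁ - a₂) * x₂ ^ a₂ = x₂ ^ b₁ := by
    rw [← Real.rpow_add hx₂]; ring_nf
  have e3 : x₁ ^ (b₂ - a₂) * x₁ ^ a₂ = x₁ ^ b₂ := by
    rw [← Real.rpow_add hx₁]; ring_nf
  have e4 : x₂ ^ (b₂ - a₂) * x₂ ^ a₂ = x₂ ^ b₂ := by
    rw [← Real.rpow_add hx₂]; ring_nf
  have e5 : x₁ ^ (b₁ - a₂) * x₁ ^ (b₂ - a₂) * x₁ ^ a₂ = x₁ ^ a₁ := by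
    rw [← Real.rpow_add hx₁, ← Real.rpow_add hx₁]
    congr 1; linarith
  have e6 : x₂ ^ (b₁ - a₂) * x₂ ^ (b₂ - a₂) * x₂ ^ a₂ = x₂ ^ a₁ := by
    rw [← Real.rpow_add hx₂, ← Real.rpow_add hx₂]
    congr 1; linarith
  rw [← e1, ← e2, ← e3, ← e4, ← e5, ← e6]
  nlinarith [hmul]
end

section
/- Let G be a subgroup of Sₙ containing the transposition (j,k) with j ≠ k. Let a = (a₁,…,aₙ) be a nonnegative vector with a_k < a_j, let ρ = (a_j + a_k)/2 and Δ = (a_j − a_k)/2, and let 0 ≤ δ < Δ. Define b = (b₁,…,bₙ) by b_j = ρ + δ, b_k = ρ − δ, and b_i = a_i for i ≠ j,k. Then for every positive vector x ∈ ℝⁿ, [x^b]_G ≤ [x^a]_G. -/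
private lemma key_rpow (u v : ℝ) (hu : 0 < u) (hv : 0 < v) (s t : ℝ)
    (hs : 0 ≤ s) (ht : 0 ≤ t) :
    u ^ s * v ^ t + u ^ t * v ^ s ≤ u ^ (s + t) + v ^ (s + t) := by
  rw [Real.rpow_add hu, Real.rpow_add hv]
  rcases le_total u v with h | h
  · nlinarith [mul_nonneg (sub_nonneg.2 (Real.rpow_le_rpow hu.le h hs))
      (sub_nonneg.2 (Real.rpow_le_rpow hu.le h ht))]
  · nlinarith [mul_nonneg (sub_nonneg.2 (Real.rpow_le_rpow hv.le h hs))
      (sub_nonneg.2 (Real.rpow_le_rpow hv.le h ht))]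

private lemma two_var (u v : ℝ) (hu : 0 < u) (hv : 0 < v) (ρ Δ δ : ℝ)
    (hρΔ : 0 ≤ ρ - Δ) (hδ0 : 0 ≤ δ) (hδΔ : δ ≤ Δ) :
    u ^ (ρ + δ) * v ^ (ρ - δ) + v ^ (ρ + δ) * u ^ (ρ - δ)
      ≤ u ^ (ρ + Δ) * v ^ (ρ - Δ) + v ^ (ρ + Δ) * u ^ (ρ - Δ) := by
  have h1 : ρ + δ = (ρ - Δ) + (Δ + δ) := by ring
  have h2 : ρ - δ = (ρ - Δ) + (Δ - δ) := by ring
  have h3 : ρ + Δ = (ρ - Δ) + (Δ + Δ) := by ring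
  have key := key_rpow u v hu hv (Δ + δ) (Δ - δ) (by linarith) (by linarith)
  have hsum : (Δ + δ) + (Δ - δ) = Δ + Δ := by ring
  rw [hsum] at key
  have hup : (0:ℝ) ≤ u ^ (ρ - Δ) := (Real.rpow_pos_of_pos hu _).le
  have hvp : (0:ℝ) ≤ v ^ (ρ - Δ) := (Real.rpow_pos_of_pos hv _).le
  have g1 : u ^ (ρ + δ) * v ^ (ρ - δ)
      = u ^ (ρ - Δ) * v ^ (ρ - Δ) * (u ^ (Δ + δ) * v ^ (Δ - δ)) := by
    rw [h1, h2, Real.rpow_add hu, Real.rpow_add hv]; ring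
  have g2 : v ^ (ρ + δ) * u ^ (ρ - δ)
      = u ^ (ρ - Δ) * v ^ (ρ - Δ) * (u ^ (Δ - δ) * v ^ (Δ + δ)) := by
    rw [h1, h2, Real.rpow_add hv, Real.rpow_add hu]; ring
  have g3 : u ^ (ρ + Δ) * v ^ (ρ - Δ)
      = u ^ (ρ - Δ) * v ^ (ρ - Δ) * u ^ (Δ + Δ) := by
    rw [h3, Real.rpow_add hu]; ring
  have g4 : v ^ (ρ + Δ) * u ^ (ρ - Δ)
      = u ^ (ρ - Δ) * v ^ (ρ - Δ) * v ^ (Δ + Δ) := by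
    rw [h3, Real.rpow_add hv]; ring
  rw [g1, g2, g3, g4, ← mul_add, ← mul_add]
  exact mul_le_mul_of_nonneg_left key (mul_nonneg hup hvp)

theorem stmt_7 (n : ℕ) (G : Subgroup (Equiv.Perm (Fin n))) [DecidablePred (· ∈ G)]
    (j k : Fin n) (hjk : j ≠ k) (hswap : Equiv.swap j k ∈ G)
    (a b : Fin n → ℝ) (ha : ∀ i, 0 ≤ a i) (hak : a k < a j)
    (ρ Δ δ : ℝ) (hρ : ρ = (a j + a k) / 2) (hΔ : Δ = (a j - a k) / 2)
    (hδ0 : 0 ≤ δ) (hδΔ : δ < Δ)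
    (hbj : b j = ρ + δ) (hbk : b k = ρ - δ)
    (hbi : ∀ i, i ≠ j → i ≠ k → b i = a i)
    (x : Fin n → ℝ) (hx : ∀ i, 0 < x i) :
    (1 / (Fintype.card G : ℝ)) * ∑ σ : G, ∏ i, x ((σ : Equiv.Perm (Fin n)) i) ^ b i
      ≤ (1 / (Fintype.card G : ℝ)) * ∑ σ : G, ∏ i, x ((σ : Equiv.Perm (Fin n)) i) ^ a i := by
  have hcard : (0:ℝ) ≤ 1 / (Fintype.card G : ℝ) := by positivity
  apply mul_le_mul_of_nonneg_left _ hcard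
  set w : G := ⟨Equiv.swap j k, hswap⟩ with hw
  have hkmem : k ∈ (Finset.univ.erase j) := Finset.mem_erase.2 ⟨Ne.symm hjk, Finset.mem_univ k⟩
  have hsplit : ∀ f : Fin n → ℝ, ∏ i, f i
      = f j * (f k * ∏ i ∈ (Finset.univ.erase j).erase k, f i) := by
    intro f
    rw [Finset.mul_prod_erase _ _ hkmem, Finset.mul_prod_erase _ _ (Finset.mem_univ j)]
  have haj : a j = ρ + Δ := by rw [hρ, hΔ]; ring
  have hak' : a k = ρ - Δ := by rw [hρ, hΔ]; ring
  have hρΔ : 0 ≤ ρ - Δ := by rw [← hak']; exact ha k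
  have hpt : ∀ σ : G,
      (∏ i, x ((σ : Equiv.Perm (Fin n)) i) ^ b i)
        + ∏ i, x (((σ * w : G) : Equiv.Perm (Fin n)) i) ^ b i
      ≤ (∏ i, x ((σ : Equiv.Perm (Fin n)) i) ^ a i)
        + ∏ i, x (((σ * w : G) : Equiv.Perm (Fin n)) i) ^ a i := by
    intro σ
    set π : Equiv.Perm (Fin n) := (σ : Equiv.Perm (Fin n)) with hπ
    have hmw : ∀ i : Fin n, ((σ * w : G) : Equiv.Perm (Fin n)) i = π (Equiv.swap j k i) := by
      intro i; rfl
    set C : ℝ := ∏ i ∈ (Finset.univ.erase j).erase k, x (π i) ^ a i with hCdef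
    have hC : (0:ℝ) ≤ C :=
      Finset.prod_nonneg fun i _ => (Real.rpow_pos_of_pos (hx _) _).le
    have hpb : ∏ i ∈ (Finset.univ.erase j).erase k, x (π i) ^ b i = C := by
      apply Finset.prod_congr rfl
      intro i hi
      rw [Finset.mem_erase, Finset.mem_erase] at hi
      rw [hbi i hi.2.1 hi.1]
    have hpb' : ∏ i ∈ (Finset.univ.erase j).erase k, x (π (Equiv.swap j k i)) ^ b i = C := by
      apply Finset.prod_congr rfl
      intro i hi
      rw [Finset.mem_erase, Finset.mem_erase] at hi
      rw [Equiv.swap_apply_of_ne_of_ne hi.2.1 hi.1, hbi i hi.2.1 hi.1]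
    have hpa' : ∏ i ∈ (Finset.univ.erase j).erase k, x (π (Equiv.swap j k i)) ^ a i = C := by
      apply Finset.prod_congr rfl
      intro i hi
      rw [Finset.mem_erase, Finset.mem_erase] at hi
      rw [Equiv.swap_apply_of_ne_of_ne hi.2.1 hi.1]
    have hswj : π (Equiv.swap j k j) = π k := by rw [Equiv.swap_apply_left]
    have hswk : π (Equiv.swap j k k) = π j := by rw [Equiv.swap_apply_right]
    have e1 : ∏ i, x (π i) ^ b i = x (π j) ^ b j * (x (π k) ^ b k * C) := by
      rw [hsplit (fun i => x (π i) ^ b i), hpb]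
    have e2 : ∏ i, x (π i) ^ a i = x (π j) ^ a j * (x (π k) ^ a k * C) := by
      rw [hsplit (fun i => x (π i) ^ a i)]
    have e3 : ∏ i, x (((σ * w : G) : Equiv.Perm (Fin n)) i) ^ b i
        = x (π k) ^ b j * (x (π j) ^ b k * C) := by
      simp only [hmw]
      rw [hsplit (fun i => x (π (Equiv.swap j k i)) ^ b i), hswj, hswk, hpb']
    have e4 : ∏ i, x (((σ * w : G) : Equiv.Perm (Fin n)) i) ^ a i
        = x (π k) ^ a j * (x (π j) ^ a k * C) := by
      simp only [hmw]
      rw [hsplit (fun i => x (π (Equiv.swap j k i)) ^ a i), hswj, hswk, hpa']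
    rw [e1, e2, e3, e4, hbj, hbk, haj, hak']
    have h2v := two_var (x (π j)) (x (π k)) (hx _) (hx _) ρ Δ δ hρΔ hδ0 hδΔ.le
    nlinarith [mul_le_mul_of_nonneg_right h2v hC]
  have hre : ∀ c : Fin n → ℝ,
      ∑ σ : G, ∏ i, x (((σ * w : G) : Equiv.Perm (Fin n)) i) ^ c i
        = ∑ σ : G, ∏ i, x ((σ : Equiv.Perm (Fin n)) i) ^ c i :=
    fun c => Equiv.sum_comp (Equiv.mulRight w)
      (fun σ : G => ∏ i, x ((σ : Equiv.Perm (Fin n)) i) ^ c i)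
  have hdouble := Finset.sum_le_sum (s := Finset.univ) (fun σ _ => hpt σ)
  rw [Finset.sum_add_distrib, Finset.sum_add_distrib, hre b, hre a] at hdouble
  linarith
end

section
/- Let n ≥ 2 and let j, k ∈ {1,…,n} with j ≠ k. Let a = (a₁,…,aₙ) be a nonnegative vector with a_k < a_j, let ρ = (a_j + a_k)/2 and Δ = (a_j − a_k)/2, and let 0 ≤ δ < Δ. Define b = (b₁,…,bₙ) by b_j = ρ + δ, b_k = ρ − δ, and b_i = a_i for i ≠ j,k. If x = (x₁,…,xₙ) is a nonconstant positive vector (i.e., x_p ≠ x_q for some p,q), then [x^b]_{Sₙ} < [x^a]_{Sₙ}. -/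
open Finset

private lemma rpow_split3 (x : ℝ) (hx : 0 < x) (ρ Δ δ : ℝ) :
    x ^ (ρ + Δ) = x ^ (ρ - Δ) * (x ^ (Δ + δ) * x ^ (Δ - δ)) := by
  rw [← Real.rpow_add hx, ← Real.rpow_add hx]
  congr 1; ring

private lemma rpow_split2 (x : ℝ) (hx : 0 < x) (ρ Δ δ : ℝ) :
    x ^ (ρ + δ) = x ^ (ρ - Δ) * x ^ (Δ + δ) ∧ x ^ (ρ - δ) = x ^ (ρ - Δ) * x ^ (Δ - δ) := by
  constructor <;> rw [← Real.rpow_add hx] <;> congr 1 <;> ring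

private lemma key_identity (x y : ℝ) (hx : 0 < x) (hy : 0 < y) (ρ Δ δ : ℝ) :
    x ^ (ρ + Δ) * y ^ (ρ - Δ) + x ^ (ρ - Δ) * y ^ (ρ + Δ)
      - (x ^ (ρ + δ) * y ^ (ρ - δ) + x ^ (ρ - δ) * y ^ (ρ + δ))
    = x ^ (ρ - Δ) * y ^ (ρ - Δ) *
        ((x ^ (Δ + δ) - y ^ (Δ + δ)) * (x ^ (Δ - δ) - y ^ (Δ - δ))) := by
  obtain ⟨ex1, ex2⟩ := rpow_split2 x hx ρ Δ δ
  obtain ⟨ey1, ey2⟩ := rpow_split2 y hy ρ Δ δ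
  rw [rpow_split3 x hx ρ Δ δ, rpow_split3 y hy ρ Δ δ, ex1, ex2, ey1, ey2]
  ring

private lemma factor_nonneg (x y : ℝ) (hx : 0 < x) (hy : 0 < y) {Δ δ : ℝ}
    (hδ : 0 ≤ δ) (hδΔ : δ < Δ) :
    0 ≤ (x ^ (Δ + δ) - y ^ (Δ + δ)) * (x ^ (Δ - δ) - y ^ (Δ - δ)) := by
  rcases le_total x y with h | h
  · have hA : x ^ (Δ + δ) ≤ y ^ (Δ + δ) := Real.rpow_le_rpow hx.le h (by linarith)
    have hB : x ^ (Δ - δ) ≤ y ^ (Δ - δ) := Real.rpow_le_rpow hx.le h (by linarith)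
    nlinarith
  · apply mul_nonneg <;> simp only [sub_nonneg] <;>
      exact Real.rpow_le_rpow hy.le h (by linarith)

private lemma factor_pos (x y : ℝ) (hx : 0 < x) (hy : 0 < y) {Δ δ : ℝ}
    (hδ : 0 ≤ δ) (hδΔ : δ < Δ) (hxy : x ≠ y) :
    0 < (x ^ (Δ + δ) - y ^ (Δ + δ)) * (x ^ (Δ - δ) - y ^ (Δ - δ)) := by
  rcases lt_or_gt_of_ne hxy with h | h
  · apply mul_pos_of_neg_of_neg <;> simp only [sub_neg] <;>
      exact Real.rpow_lt_rpow hx.le h (by linarith)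
  · apply mul_pos <;> simp only [sub_pos] <;>
      exact Real.rpow_lt_rpow hy.le h (by linarith)

private lemma key_le (x y : ℝ) (hx : 0 < x) (hy : 0 < y) {ρ Δ δ : ℝ}
    (hδ : 0 ≤ δ) (hδΔ : δ < Δ) :
    x ^ (ρ + δ) * y ^ (ρ - δ) + x ^ (ρ - δ) * y ^ (ρ + δ)
      ≤ x ^ (ρ + Δ) * y ^ (ρ - Δ) + x ^ (ρ - Δ) * y ^ (ρ + Δ) := by
  have h1 := key_identity x y hx hy ρ Δ δ
  have h2 := factor_nonneg x y hx hy hδ hδΔ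
  have h3 : (0:ℝ) ≤ x ^ (ρ - Δ) * y ^ (ρ - Δ) := by positivity
  nlinarith [mul_nonneg h3 h2]

private lemma key_lt (x y : ℝ) (hx : 0 < x) (hy : 0 < y) {ρ Δ δ : ℝ}
    (hδ : 0 ≤ δ) (hδΔ : δ < Δ) (hxy : x ≠ y) :
    x ^ (ρ + δ) * y ^ (ρ - δ) + x ^ (ρ - δ) * y ^ (ρ + δ)
      < x ^ (ρ + Δ) * y ^ (ρ - Δ) + x ^ (ρ - Δ) * y ^ (ρ + Δ) := by
  have h1 := key_identity x y hx hy ρ Δ δ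
  have h2 := factor_pos x y hx hy hδ hδΔ hxy
  have h3 : (0:ℝ) < x ^ (ρ - Δ) * y ^ (ρ - Δ) := by positivity
  nlinarith [mul_pos h3 h2]

theorem stmt_8 (n : ℕ) (hn : 2 ≤ n) (j k : Fin n) (hjk : j ≠ k)
    (a b : Fin n → ℝ) (ha : ∀ i, 0 ≤ a i) (hak : a k < a j)
    (ρ Δ δ : ℝ) (hρ : ρ = (a j + a k) / 2) (hΔ : Δ = (a j - a k) / 2)
    (hδ0 : 0 ≤ δ) (hδΔ : δ < Δ)
    (hbj : b j = ρ + δ) (hbk : b k = ρ - δ)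
    (hbi : ∀ i, i ≠ j → i ≠ k → b i = a i)
    (x : Fin n → ℝ) (hx : ∀ i, 0 < x i) (hnc : ∃ p q, x p ≠ x q) :
    (1 / (Nat.factorial n : ℝ)) * ∑ σ : Equiv.Perm (Fin n), ∏ i, x (σ i) ^ b i
      < (1 / (Nat.factorial n : ℝ)) * ∑ σ : Equiv.Perm (Fin n), ∏ i, x (σ i) ^ a i := by
  have hkj : k ≠ j := hjk.symm
  set τ : Equiv.Perm (Fin n) := Equiv.swap j k with hτ
  have hτj : τ j = k := Equiv.swap_apply_left j k
  have hτk : τ k = j := Equiv.swap_apply_right j k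
  have hτi : ∀ i, i ≠ j → i ≠ k → τ i = i := fun i h1 h2 => Equiv.swap_apply_of_ne_of_ne h1 h2
  have hkmem : k ∈ univ.erase j := Finset.mem_erase.2 ⟨hkj, Finset.mem_univ k⟩
  set P : Equiv.Perm (Fin n) → ℝ := fun σ => ∏ i ∈ (univ.erase j).erase k, x (σ i) ^ a i
    with hPdef
  have hPpos : ∀ σ, 0 < P σ :=
    fun σ => Finset.prod_pos (fun i _ => Real.rpow_pos_of_pos (hx _) _)
  -- splitting the product
  have decomp : ∀ (c : Fin n → ℝ), (∀ i, i ≠ j → i ≠ k → c i = a i) →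
      ∀ σ : Equiv.Perm (Fin n),
        ∏ i, x (σ i) ^ c i = x (σ j) ^ c j * x (σ k) ^ c k * P σ := by
    intro c hc σ
    rw [← Finset.mul_prod_erase univ _ (Finset.mem_univ j),
        ← Finset.mul_prod_erase _ _ hkmem, ← mul_assoc]
    congr 1
    apply Finset.prod_congr rfl
    intro i hi
    simp only [Finset.mem_erase, Finset.mem_univ] at hi
    rw [hc i hi.2.1 hi.1]
  -- reindexing by right multiplication with the swap
  have hswap : ∀ c : Fin n → ℝ,
      ∑ σ : Equiv.Perm (Fin n), ∏ i, x (σ i) ^ c i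
        = ∑ σ : Equiv.Perm (Fin n), ∏ i, x (σ i) ^ c (τ i) := by
    intro c
    rw [← Equiv.sum_comp (Equiv.mulRight τ) (fun σ => ∏ i, x (σ i) ^ c i)]
    apply Finset.sum_congr rfl
    intro σ _
    simp only [Equiv.coe_mulRight, Equiv.Perm.mul_apply]
    rw [← Equiv.prod_comp τ (fun i => x (σ i) ^ c (τ i))]
    apply Finset.prod_congr rfl
    intro i _
    rw [show τ (τ i) = i from by simp [hτ, Equiv.swap_apply_self]]
  have hbτ : ∀ i, i ≠ j → i ≠ k → b (τ i) = a i := fun i h1 h2 => by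
    rw [hτi i h1 h2, hbi i h1 h2]
  have haτ : ∀ i, i ≠ j → i ≠ k → a (τ i) = a i := fun i h1 h2 => by rw [hτi i h1 h2]
  have sum_b : 2 * ∑ σ : Equiv.Perm (Fin n), ∏ i, x (σ i) ^ b i
      = ∑ σ : Equiv.Perm (Fin n),
          (x (σ j) ^ b j * x (σ k) ^ b k + x (σ j) ^ b k * x (σ k) ^ b j) * P σ := by
    rw [two_mul]
    nth_rewrite 2 [hswap b]
    rw [← Finset.sum_add_distrib]
    apply Finset.sum_congr rfl
    intro σ _
    rw [decomp b hbi σ, decomp (fun i => b (τ i)) hbτ σ]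
    simp only [hτj, hτk]
    ring
  have sum_a : 2 * ∑ σ : Equiv.Perm (Fin n), ∏ i, x (σ i) ^ a i
      = ∑ σ : Equiv.Perm (Fin n),
          (x (σ j) ^ a j * x (σ k) ^ a k + x (σ j) ^ a k * x (σ k) ^ a j) * P σ := by
    rw [two_mul]
    nth_rewrite 2 [hswap a]
    rw [← Finset.sum_add_distrib]
    apply Finset.sum_congr rfl
    intro σ _
    rw [decomp a (fun i _ _ => rfl) σ, decomp (fun i => a (τ i)) haτ σ]
    simp only [hτj, hτk]
    ring
  have haj2 : a j = ρ + Δ := by rw [hρ, hΔ]; ring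
  have hak2 : a k = ρ - Δ := by rw [hρ, hΔ]; ring
  -- termwise inequality
  have termle : ∀ σ : Equiv.Perm (Fin n),
      (x (σ j) ^ b j * x (σ k) ^ b k + x (σ j) ^ b k * x (σ k) ^ b j) * P σ
        ≤ (x (σ j) ^ a j * x (σ k) ^ a k + x (σ j) ^ a k * x (σ k) ^ a j) * P σ := by
    intro σ
    rw [hbj, hbk, haj2, hak2]
    exact mul_le_mul_of_nonneg_right (key_le _ _ (hx _) (hx _) hδ0 hδΔ) (hPpos σ).le
  -- the strict witness
  obtain ⟨p, q, hpq⟩ := hnc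
  have hpq' : p ≠ q := fun h => hpq (by rw [h])
  set τ1 : Equiv.Perm (Fin n) := Equiv.swap j p with hτ1
  have h1 : τ1 j = p := Equiv.swap_apply_left j p
  have h2 : τ1 k ≠ p := by
    rw [← h1]; exact fun h => hkj (τ1.injective h)
  set σ0 : Equiv.Perm (Fin n) := Equiv.swap (τ1 k) q * τ1 with hσ0
  have hσ0k : σ0 k = q := by
    show Equiv.swap (τ1 k) q (τ1 k) = q
    rw [Equiv.swap_apply_left]
  have hσ0j : σ0 j = p := by
    show Equiv.swap (τ1 k) q (τ1 j) = p
    rw [h1, Equiv.swap_apply_of_ne_of_ne (Ne.symm h2) hpq']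
  have termlt :
      (x (σ0 j) ^ b j * x (σ0 k) ^ b k + x (σ0 j) ^ b k * x (σ0 k) ^ b j) * P σ0
        < (x (σ0 j) ^ a j * x (σ0 k) ^ a k + x (σ0 j) ^ a k * x (σ0 k) ^ a j) * P σ0 := by
    rw [hbj, hbk, haj2, hak2]
    apply mul_lt_mul_of_pos_right _ (hPpos σ0)
    apply key_lt _ _ (hx _) (hx _) hδ0 hδΔ
    rw [hσ0j, hσ0k]; exact hpq
  have main :
      ∑ σ : Equiv.Perm (Fin n),
          (x (σ j) ^ b j * x (σ k) ^ b k + x (σ j) ^ b k * x (σ k) ^ b j) * P σ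
        < ∑ σ : Equiv.Perm (Fin n),
          (x (σ j) ^ a j * x (σ k) ^ a k + x (σ j) ^ a k * x (σ k) ^ a j) * P σ :=
    Finset.sum_lt_sum (fun σ _ => termle σ) ⟨σ0, Finset.mem_univ _, termlt⟩
  have h2' : 2 * ∑ σ : Equiv.Perm (Fin n), ∏ i, x (σ i) ^ b i
      < 2 * ∑ σ : Equiv.Perm (Fin n), ∏ i, x (σ i) ^ a i := by
    rw [sum_b, sum_a]; exact main
  have hsum : ∑ σ : Equiv.Perm (Fin n), ∏ i, x (σ i) ^ b i
      < ∑ σ : Equiv.Perm (Fin n), ∏ i, x (σ i) ^ a i := by linarith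
  have hfac : (0:ℝ) < 1 / (Nat.factorial n : ℝ) := by
    have := Nat.factorial_pos n
    positivity
  exact mul_lt_mul_of_pos_left hsum hfac
end

section
/- (Muirhead's inequality.) Let a = (a₁,…,aₙ) and b = (b₁,…,bₙ) be decreasing vectors of nonnegative real numbers such that b is strictly majorized by a, i.e., Σ_{i=1}^k b_i ≤ Σ_{i=1}^k a_i for all k ∈ {1,…,n−1}, Σ_{i=1}^n b_i = Σ_{i=1}^n a_i, and b ≠ a. Then for every nonconstant positive vector x ∈ ℝⁿ, [x^b]_{Sₙ} < [x^a]_{Sₙ}. -/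
/-!
Muirhead's inequality by Robin Hood transfers. If `b ≼ a`, `b` is antitone and `a ≠ b`, take the
first `k` with `a k < b k` and some `j < k` with `a j > b j`; moving
`δ = min (a j - b j) (b k - a k)` from the exponent `a j` to `a k` keeps `b ≼ a` and makes one more
coordinate agree with `b`. Each transfer strictly lowers the symmetric sum: pairing `σ` with
`σ * swap j k` reduces this to
`u ^ (p - t) v ^ (q + t) + u ^ (q + t) v ^ (p - t) < u ^ p v ^ q + u ^ q v ^ p`
for `0 < t < p - q` and `u ≠ v`, where the difference of the two sides is
`u ^ q v ^ q (u ^ (p - q - t) - v ^ (p - q - t)) (u ^ t - v ^ t)`.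
-/

open Real Finset Equiv

variable {ι : Type*}

section PairInequality

variable {u v : ℝ}

lemma rpow_pair_sub_eq (hu : 0 < u) (hv : 0 < v) (q α t : ℝ) :
    (u ^ (q + α + t) * v ^ q + u ^ q * v ^ (q + α + t))
      - (u ^ (q + α) * v ^ (q + t) + u ^ (q + t) * v ^ (q + α))
      = u ^ q * v ^ q * ((u ^ α - v ^ α) * (u ^ t - v ^ t)) := by
  simp only [rpow_add hu, rpow_add hv]
  ring

lemma sub_rpow_mul_sub_rpow_pos (hu : 0 < u) (hv : 0 < v) (huv : u ≠ v) {α t : ℝ}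
    (hα : 0 < α) (ht : 0 < t) : 0 < (u ^ α - v ^ α) * (u ^ t - v ^ t) := by
  rcases huv.lt_or_gt with h | h
  · exact mul_pos_of_neg_of_neg (sub_neg.2 (rpow_lt_rpow hu.le h hα))
      (sub_neg.2 (rpow_lt_rpow hu.le h ht))
  · exact mul_pos (sub_pos.2 (rpow_lt_rpow hv.le h hα)) (sub_pos.2 (rpow_lt_rpow hv.le h ht))

lemma rpow_pair_transfer_lt (hu : 0 < u) (hv : 0 < v) (huv : u ≠ v) {p q t : ℝ}
    (ht : 0 < t) (htpq : t < p - q) :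
    u ^ (p - t) * v ^ (q + t) + u ^ (q + t) * v ^ (p - t) < u ^ p * v ^ q + u ^ q * v ^ p := by
  obtain ⟨α, hα, rfl⟩ : ∃ α, 0 < α ∧ p = q + α + t := ⟨p - q - t, by linarith, by ring⟩
  rw [add_sub_cancel_right]
  have hpos := mul_pos (mul_pos (rpow_pos_of_pos hu q) (rpow_pos_of_pos hv q))
    (sub_rpow_mul_sub_rpow_pos hu hv huv hα ht)
  linarith [rpow_pair_sub_eq hu hv q α t]

lemma rpow_pair_transfer_le (hu : 0 < u) (hv : 0 < v) {p q t : ℝ}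
    (ht : 0 < t) (htpq : t < p - q) :
    u ^ (p - t) * v ^ (q + t) + u ^ (q + t) * v ^ (p - t) ≤ u ^ p * v ^ q + u ^ q * v ^ p := by
  rcases eq_or_ne u v with rfl | huv
  · simp only [← rpow_add hu]
    exact le_of_eq (by ring_nf)
  · exact (rpow_pair_transfer_lt hu hv huv ht htpq).le

end PairInequality

lemma exists_perm_apply_ne {β : Type*} {j k : ι} (hjk : j ≠ k) {x : ι → β}
    (hx : ∃ p q, x p ≠ x q) : ∃ σ : Perm ι, x (σ j) ≠ x (σ k) := by
  obtain ⟨p, q, hpq⟩ := hx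
  obtain ⟨σ, hσ⟩ := Perm.exists_extending_pair ![j, k] ![p, q]
    (injective_pair_iff_ne.2 hjk) (injective_pair_iff_ne.2 (ne_of_apply_ne x hpq))
  exact ⟨σ, by simpa using (hσ 0).symm ▸ (hσ 1).symm ▸ hpq⟩

section Transfer

variable [DecidableEq ι]

def transfer (c : ι → ℝ) (j k : ι) (δ : ℝ) : ι → ℝ := c - Pi.single j δ + Pi.single k δ

variable {c : ι → ℝ} {j k : ι} {δ : ℝ}

lemma transfer_apply_left (hjk : j ≠ k) : transfer c j k δ j = c j - δ := by
  simp [transfer, hjk]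

lemma transfer_apply_right (hjk : j ≠ k) : transfer c j k δ k = c k + δ := by
  simp [transfer, hjk.symm]

lemma transfer_apply_of_ne {i : ι} (hij : i ≠ j) (hik : i ≠ k) : transfer c j k δ i = c i := by
  simp [transfer, hij, hik]

lemma sum_transfer (s : Finset ι) :
    ∑ i ∈ s, transfer c j k δ i
      = ∑ i ∈ s, c i - (if j ∈ s then δ else 0) + (if k ∈ s then δ else 0) := by
  simp [transfer, sum_add_distrib, sum_sub_distrib]

lemma card_filter_transfer_ne_lt [Fintype ι] {a b : ι → ℝ} (hjk : j ≠ k) (hj : a j ≠ b j)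
    (hk : a k ≠ b k) (hfix : transfer a j k δ j = b j ∨ transfer a j k δ k = b k) :
    #{i | transfer a j k δ i ≠ b i} < #{i | a i ≠ b i} := by
  refine card_lt_card ((ssubset_iff_of_subset fun i hi => ?_).2 ?_)
  · simp only [mem_filter, mem_univ, true_and] at hi ⊢
    rcases eq_or_ne i j with rfl | hij
    · exact hj
    rcases eq_or_ne i k with rfl | hik
    · exact hk
    rwa [transfer_apply_of_ne hij hik] at hi
  · rcases hfix with h | h
    · exact ⟨j, by simpa using hj, by simpa using h⟩
    · exact ⟨k, by simpa using hk, by simpa using h⟩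

end Transfer

section SymmSum

variable [Fintype ι] [DecidableEq ι]

noncomputable def symmSum (x c : ι → ℝ) : ℝ := ∑ σ : Perm ι, ∏ i, x (σ i) ^ c i

lemma two_mul_symmSum (x c : ι → ℝ) (j k : ι) :
    2 * symmSum x c = ∑ σ : Perm ι, (∏ i, x (σ i) ^ c i + ∏ i, x ((σ * swap j k) i) ^ c i) := by
  rw [sum_add_distrib, two_mul, symmSum]
  congr 1
  exact (Equiv.sum_comp (Equiv.mulRight (swap j k)) _).symm

lemma prod_add_prod_mul_swap (x c : ι → ℝ) {j k : ι} (hjk : j ≠ k) (σ : Perm ι) :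
    ∏ i, x (σ i) ^ c i + ∏ i, x ((σ * swap j k) i) ^ c i
      = (∏ i ∈ {j, k}ᶜ, x (σ i) ^ c i)
        * (x (σ j) ^ c j * x (σ k) ^ c k + x (σ j) ^ c k * x (σ k) ^ c j) := by
  have hcompl : ∏ i ∈ {j, k}ᶜ, x ((σ * swap j k) i) ^ c i = ∏ i ∈ {j, k}ᶜ, x (σ i) ^ c i := by
    refine prod_congr rfl fun i hi => ?_
    simp only [mem_compl, mem_insert, mem_singleton, not_or] at hi
    rw [Perm.mul_apply, swap_apply_of_ne_of_ne hi.1 hi.2]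
  rw [← prod_mul_prod_compl {j, k},
    ← prod_mul_prod_compl {j, k} (fun i => x ((σ * swap j k) i) ^ c i), hcompl,
    prod_pair hjk, prod_pair hjk]
  simp only [Perm.mul_apply, swap_apply_left, swap_apply_right]
  ring

theorem symmSum_transfer_lt {x : ι → ℝ} (hx : ∀ i, 0 < x i) (hnc : ∃ p q, x p ≠ x q)
    {c : ι → ℝ} {j k : ι} {δ : ℝ} (hδ : 0 < δ) (hδc : δ < c j - c k) :
    symmSum x (transfer c j k δ) < symmSum x c := by
  have hjk : j ≠ k := by
    rintro rfl
    linarith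
  have hcompl : ∀ σ : Perm ι,
      ∏ i ∈ {j, k}ᶜ, x (σ i) ^ transfer c j k δ i = ∏ i ∈ {j, k}ᶜ, x (σ i) ^ c i := by
    refine fun σ => prod_congr rfl fun i hi => ?_
    simp only [mem_compl, mem_insert, mem_singleton, not_or] at hi
    rw [transfer_apply_of_ne hi.1 hi.2]
  have hpos : ∀ σ : Perm ι, 0 < ∏ i ∈ {j, k}ᶜ, x (σ i) ^ c i :=
    fun σ => prod_pos fun i _ => rpow_pos_of_pos (hx _) _
  obtain ⟨σ₀, hσ₀⟩ := exists_perm_apply_ne hjk hnc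
  have key := sum_lt_sum (s := univ)
    (f := fun σ : Perm ι => ∏ i, x (σ i) ^ transfer c j k δ i
      + ∏ i, x ((σ * swap j k) i) ^ transfer c j k δ i)
    (g := fun σ : Perm ι => ∏ i, x (σ i) ^ c i + ∏ i, x ((σ * swap j k) i) ^ c i)
    (fun σ _ => ?_) ⟨σ₀, mem_univ _, ?_⟩
  · rw [← two_mul_symmSum, ← two_mul_symmSum] at key
    linarith
  all_goals
    simp only [prod_add_prod_mul_swap x _ hjk, hcompl, transfer_apply_left hjk,
      transfer_apply_right hjk]
  · exact mul_le_mul_of_nonneg_left (rpow_pair_transfer_le (hx _) (hx _) hδ hδc) (hpos σ).le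
  · exact mul_lt_mul_of_pos_left (rpow_pair_transfer_lt (hx _) (hx _) hσ₀ hδ hδc) (hpos σ₀)

end SymmSum

section Majorization

variable [Fintype ι] [LinearOrder ι]

/-- Majorization `b ≼ a` read off the partial sums in the order of `ι`; for antitone `a` and `b`
this is the usual notion. -/
def PrefixMajorized (b a : ι → ℝ) : Prop :=
  (∀ k, ∑ i with i ≤ k, b i ≤ ∑ i with i ≤ k, a i) ∧ ∑ i, b i = ∑ i, a i

namespace PrefixMajorized

variable {a b : ι → ℝ}

lemma exists_first_lt (h : PrefixMajorized b a) (hne : a ≠ b) :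
    ∃ k, a k < b k ∧ ∀ i < k, b i ≤ a i := by
  have hex : ∃ i, a i < b i := by
    by_contra! hle
    exact hne (funext fun i => ((sum_eq_sum_iff_of_le fun i _ => hle i).1 h.2 i (mem_univ i)).symm)
  obtain ⟨k, hk, hmin⟩ := wellFounded_lt.has_min {i | a i < b i} hex
  exact ⟨k, hk, fun i hi => not_lt.1 fun h => hmin i h hi⟩

lemma exists_lt_gt (h : PrefixMajorized b a) {k : ι} (hk : a k < b k) :
    ∃ j < k, b j < a j := by
  have hex : ∃ j ≤ k, b j < a j := by
    by_contra! hle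
    exact (h.1 k).not_gt (sum_lt_sum (fun i hi => hle i (mem_filter.1 hi).2) ⟨k, by simp, hk⟩)
  obtain ⟨j, hjk, hj⟩ := hex
  exact ⟨j, hjk.lt_of_ne (by rintro rfl; linarith), hj⟩

lemma transfer {j k : ι} {δ : ℝ} (h : PrefixMajorized b a) (hjk : j < k) (hδ : δ ≤ a j - b j)
    (hbefore : ∀ i < k, b i ≤ a i) : PrefixMajorized b (_root_.transfer a j k δ) := by
  refine ⟨fun m => ?_, by simp [sum_transfer, h.2]⟩
  rw [sum_transfer]
  simp only [mem_filter, mem_univ, true_and]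
  split_ifs with hjm hkm hkm
  · linarith [h.1 m]
  · -- the partial sums of `a - b` up to `m < k` have nonnegative terms, one of which is `a j - b j`
    have hle : a j - b j ≤ ∑ i with i ≤ m, (a i - b i) :=
      single_le_sum (f := fun i => a i - b i)
        (fun i hi => sub_nonneg.2 (hbefore i ((mem_filter.1 hi).2.trans_lt (not_le.1 hkm))))
        (by simpa using hjm)
    rw [sum_sub_distrib] at hle
    linarith
  · exact absurd (hjk.le.trans hkm) hjm
  · linarith [h.1 m]

lemma exists_transfer (hb : Antitone b) (h : PrefixMajorized b a) (hne : a ≠ b) :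
    ∃ j k δ, 0 < δ ∧ δ < a j - a k ∧ PrefixMajorized b (_root_.transfer a j k δ) ∧
      #{i | _root_.transfer a j k δ i ≠ b i} < #{i | a i ≠ b i} := by
  obtain ⟨k, hk, hbefore⟩ := h.exists_first_lt hne
  obtain ⟨j, hjk, hj⟩ := h.exists_lt_gt hk
  set δ := min (a j - b j) (b k - a k)
  have hδ : 0 < δ := lt_min (sub_pos.2 hj) (sub_pos.2 hk)
  have hδj : δ ≤ a j - b j := min_le_left _ _
  have hδk : δ ≤ b k - a k := min_le_right _ _
  refine ⟨j, k, δ, hδ, ?_, h.transfer hjk hδj hbefore,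
    card_filter_transfer_ne_lt hjk.ne hj.ne' hk.ne ?_⟩
  · linarith [hb hjk.le]
  · rw [transfer_apply_left hjk.ne, transfer_apply_right hjk.ne]
    rcases min_choice (a j - b j) (b k - a k) with h | h
    · left; linarith
    · right; linarith

end PrefixMajorized

end Majorization

theorem symmSum_lt_of_prefixMajorized [Fintype ι] [LinearOrder ι] {x : ι → ℝ}
    (hx : ∀ i, 0 < x i) (hnc : ∃ p q, x p ≠ x q) {a b : ι → ℝ} (hb : Antitone b)
    (h : PrefixMajorized b a) (hne : a ≠ b) : symmSum x b < symmSum x a := by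
  induction hN : #{i | a i ≠ b i} using Nat.strong_induction_on generalizing a with
  | _ N ih =>
    obtain ⟨j, k, δ, hδ, hδa, h', hcard⟩ := h.exists_transfer hb hne
    have hstep := symmSum_transfer_lt hx hnc hδ hδa
    by_cases hb' : transfer a j k δ = b
    · rwa [hb'] at hstep
    · exact (ih _ (hN ▸ hcard) h' hb' rfl).trans hstep

lemma Fin.prefixMajorized_of_sum_lt_le {n : ℕ} {a b : Fin n → ℝ}
    (hmaj : ∀ m < n, ∑ i ∈ univ.filter (fun i : Fin n => (i : ℕ) < m), b i
      ≤ ∑ i ∈ univ.filter (fun i : Fin n => (i : ℕ) < m), a i)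
    (hsum : ∑ i, b i = ∑ i, a i) : PrefixMajorized b a := by
  refine ⟨fun k => ?_, hsum⟩
  rcases lt_or_ge ((k : ℕ) + 1) n with hk | hk
  · have hle : ∀ i : Fin n, i ≤ k ↔ (i : ℕ) < k + 1 :=
      fun i => Fin.le_iff_val_le_val.trans Nat.lt_succ_iff.symm
    simpa only [hle] using hmaj _ hk
  · have hle : ∀ i : Fin n, i ≤ k := fun i => Fin.le_iff_val_le_val.2 (by omega)
    simpa only [hle, filter_true] using hsum.le

theorem stmt_9_general (n : ℕ) (a b : Fin n → ℝ)
    (hb : Antitone b)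
    (hmaj : ∀ k : ℕ, k < n →
      ∑ i ∈ Finset.univ.filter (fun i : Fin n => (i : ℕ) < k), b i
        ≤ ∑ i ∈ Finset.univ.filter (fun i : Fin n => (i : ℕ) < k), a i)
    (hsum : ∑ i, b i = ∑ i, a i) (hne : b ≠ a)
    (x : Fin n → ℝ) (hx : ∀ i, 0 < x i) (hnc : ∃ p q, x p ≠ x q) :
    (1 / (Nat.factorial n : ℝ)) * ∑ σ : Equiv.Perm (Fin n), ∏ i, x (σ i) ^ b i
      < (1 / (Nat.factorial n : ℝ)) * ∑ σ : Equiv.Perm (Fin n), ∏ i, x (σ i) ^ a i :=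
  mul_lt_mul_of_pos_left
    (symmSum_lt_of_prefixMajorized hx hnc hb (Fin.prefixMajorized_of_sum_lt_le hmaj hsum) hne.symm)
    (by positivity)

theorem stmt_9 (n : ℕ) (a b : Fin n → ℝ)
    (ha0 : ∀ i, 0 ≤ a i) (hb0 : ∀ i, 0 ≤ b i)
    (ha : Antitone a) (hb : Antitone b)
    (hmaj : ∀ k : ℕ, k < n →
      ∑ i ∈ Finset.univ.filter (fun i : Fin n => (i : ℕ) < k), b i
        ≤ ∑ i ∈ Finset.univ.filter (fun i : Fin n => (i : ℕ) < k), a i)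
    (hsum : ∑ i, b i = ∑ i, a i) (hne : b ≠ a)
    (x : Fin n → ℝ) (hx : ∀ i, 0 < x i) (hnc : ∃ p q, x p ≠ x q) :
    (1 / (Nat.factorial n : ℝ)) * ∑ σ : Equiv.Perm (Fin n), ∏ i, x (σ i) ^ b i
      < (1 / (Nat.factorial n : ℝ)) * ∑ σ : Equiv.Perm (Fin n), ∏ i, x (σ i) ^ a i :=
  stmt_9_general n a b hb hmaj hsum hne x hx hnc
end

section
/- Let c₁, …, cₙ be real numbers such that Σ_{i=1}^n c_i = 0 and c_i ≠ 0 for some i. Then for every nonconstant positive vector x = (x₁,…,xₙ) ∈ ℝⁿ, n! < Σ_{σ ∈ Sₙ} Π_{i=1}^n x_{σ(i)}^{c_i}, where powers are real powers. -/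
theorem stmt_10 (n : ℕ) (c : Fin n → ℝ) (hc : ∑ i, c i = 0) (hc0 : ∃ i, c i ≠ 0)
    (x : Fin n → ℝ) (hx : ∀ i, 0 < x i) (hnc : ∃ p q, x p ≠ x q) :
    (Nat.factorial n : ℝ) < ∑ σ : Equiv.Perm (Fin n), ∏ i, x (σ i) ^ c i := by
  classical
  obtain ⟨i, hci⟩ := hc0
  set t : Equiv.Perm (Fin n) → ℝ := fun σ => ∑ k, Real.log (x (σ k)) * c k with ht
  have hprod : ∀ σ : Equiv.Perm (Fin n), ∏ k, x (σ k) ^ c k = Real.exp (t σ) := by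
    intro σ
    rw [ht, Real.exp_sum]
    exact Finset.prod_congr rfl fun k _ => Real.rpow_def_of_pos (hx _) _
  -- the total sum of t is zero
  have hkey : ∀ k : Fin n, ∑ σ : Equiv.Perm (Fin n), Real.log (x (σ k))
      = ∑ σ : Equiv.Perm (Fin n), Real.log (x (σ i)) := by
    intro k
    refine Fintype.sum_equiv (Equiv.mulRight (Equiv.swap k i)) _ _ fun σ => ?_
    simp [Equiv.Perm.mul_apply]
  have hsum : ∑ σ : Equiv.Perm (Fin n), t σ = 0 := by
    calc ∑ σ : Equiv.Perm (Fin n), t σ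
        = ∑ k, (∑ σ : Equiv.Perm (Fin n), Real.log (x (σ k))) * c k := by
          rw [ht, Finset.sum_comm]
          simp [Finset.sum_mul]
      _ = ∑ k, (∑ σ : Equiv.Perm (Fin n), Real.log (x (σ i))) * c k := by
          exact Finset.sum_congr rfl fun k _ => by rw [hkey k]
      _ = (∑ σ : Equiv.Perm (Fin n), Real.log (x (σ i))) * ∑ k, c k := by
          rw [Finset.mul_sum]
      _ = 0 := by rw [hc, mul_zero]
  -- there exist two permutations with different t-values
  have hn : 0 < n := i.pos
  have hj : ∃ j, c j ≠ c i := by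
    by_contra h
    push_neg at h
    have : ∑ k, c k = n * c i := by simp [h, Finset.sum_const, mul_comm]
    rw [hc] at this
    have hn' : (n : ℝ) ≠ 0 := Nat.cast_ne_zero.2 hn.ne'
    exact hci ((mul_eq_zero.1 this.symm).resolve_left hn')
  obtain ⟨j, hcj⟩ := hj
  have hij : i ≠ j := fun h => hcj (by rw [h])
  obtain ⟨p, q, hpq⟩ := hnc
  have hpq' : p ≠ q := fun h => hpq (by rw [h])
  have hlog : Real.log (x p) ≠ Real.log (x q) := fun h =>
    hpq (by rw [← Real.exp_log (hx p), ← Real.exp_log (hx q), h])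
  set τ : Equiv.Perm (Fin n) := Equiv.swap i p with hτ
  have hτj : τ j ≠ p := by
    intro h
    have : τ j = τ i := by rw [h, hτ, Equiv.swap_apply_left]
    exact hij.symm (τ.injective this)
  set σ : Equiv.Perm (Fin n) := Equiv.swap (τ j) q * τ with hσ
  have hσi : σ i = p := by
    rw [hσ, Equiv.Perm.mul_apply, hτ, Equiv.swap_apply_left,
      Equiv.swap_apply_of_ne_of_ne (Ne.symm hτj) hpq']
  have hσj : σ j = q := by
    rw [hσ, Equiv.Perm.mul_apply, Equiv.swap_apply_left]
  set σ' : Equiv.Perm (Fin n) := σ * Equiv.swap i j with hσ'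
  have hts : t σ' = ∑ k, Real.log (x (σ k)) * c (Equiv.swap i j k) := by
    rw [ht]
    refine Fintype.sum_equiv (Equiv.swap i j) _ _ fun k => ?_
    rw [hσ', Equiv.Perm.mul_apply, Equiv.swap_apply_self]
  have htne : t σ ≠ t σ' := by
    intro heq
    have h0 : ∑ k, Real.log (x (σ k)) * (c k - c (Equiv.swap i j k)) = 0 := by
      have h' := heq
      rw [hts] at h'
      simp only [ht] at h'
      simp only [mul_sub, Finset.sum_sub_distrib, h', sub_self]
    have h1 : ∑ k ∈ ({i, j} : Finset (Fin n)),
        Real.log (x (σ k)) * (c k - c (Equiv.swap i j k)) = 0 := by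
      rw [← h0]
      refine Finset.sum_subset (Finset.subset_univ _) fun k _ hk => ?_
      simp only [Finset.mem_insert, Finset.mem_singleton, not_or] at hk
      rw [Equiv.swap_apply_of_ne_of_ne hk.1 hk.2, sub_self, mul_zero]
    rw [Finset.sum_pair hij, hσi, hσj, Equiv.swap_apply_left, Equiv.swap_apply_right] at h1
    have : (Real.log (x p) - Real.log (x q)) * (c i - c j) = 0 := by ring_nf; linarith [h1]
    rcases mul_eq_zero.1 this with h | h
    · exact hlog (by linarith [sub_eq_zero.1 h])
    · exact hcj (by have := sub_eq_zero.1 h; rw [this])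
  -- Jensen
  have hfac : (0 : ℝ) < (n.factorial : ℝ) := by positivity
  have hcard : (Finset.univ : Finset (Equiv.Perm (Fin n))).card = n.factorial := by
    rw [Finset.card_univ, Fintype.card_perm, Fintype.card_fin]
  have hjensen := strictConvexOn_exp.map_sum_lt
    (w := fun _ : Equiv.Perm (Fin n) => ((n.factorial : ℝ))⁻¹)
    (p := t) (t := Finset.univ)
    (fun _ _ => by positivity)
    (by rw [Finset.sum_const, hcard, nsmul_eq_mul, mul_inv_cancel₀ hfac.ne'])
    (fun _ _ => Set.mem_univ _)
    ⟨σ, Finset.mem_univ _, σ', Finset.mem_univ _, htne⟩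
  simp only [smul_eq_mul, ← Finset.mul_sum, hsum, mul_zero, Real.exp_zero] at hjensen
  have : (n.factorial : ℝ) * 1 < (n.factorial : ℝ) * ((n.factorial : ℝ)⁻¹ *
      ∑ σ : Equiv.Perm (Fin n), Real.exp (t σ)) := by
    exact (mul_lt_mul_iff_right₀ hfac).2 hjensen
  rw [mul_one, ← mul_assoc, mul_inv_cancel₀ hfac.ne', one_mul] at this
  calc (n.factorial : ℝ) < ∑ σ : Equiv.Perm (Fin n), Real.exp (t σ) := this
    _ = _ := by exact Finset.sum_congr rfl fun σ _ => (hprod σ).symm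
end

section
/- Let a = (a₁,…,aₙ) and b = (b₁,…,bₙ) be distinct decreasing vectors of nonnegative real numbers. If [x^b]_{Sₙ} ≤ [x^a]_{Sₙ} for every positive vector x ∈ ℝⁿ, then b is strictly majorized by a: Σ_{i=1}^k b_i ≤ Σ_{i=1}^k a_i for all k ∈ {1,…,n−1} and Σ_{i=1}^n b_i = Σ_{i=1}^n a_i. -/
/-!
Evaluate both symmetric means at `x = t ^ w` for an antitone weight vector `w` and let `t → ∞`.
The term of the identity permutation shows that the left side grows at least like
`t ^ ∑ w i * b i`, while by the rearrangement inequality each of the `n!` terms on the right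
is at most `t ^ ∑ w i * a i`. Hence `∑ w i * b i ≤ ∑ w i * a i`. The weights `w = 1_{i < k}`
give the partial-sum inequalities, and the constant weights `1` and `-1` give equality of the
total sums.
-/

open Finset Filter

lemma le_of_forall_rpow_le_mul_rpow {A B C : ℝ} (h : ∀ t : ℝ, 1 < t → t ^ B ≤ C * t ^ A) :
    B ≤ A := by
  by_contra! hAB
  obtain ⟨t, ht_big, ht_one⟩ := ((tendsto_rpow_atTop (sub_pos.2 hAB)).eventually_gt_atTop C
    |>.and (eventually_gt_atTop 1)).exists
  have ht : 0 < t := one_pos.trans ht_one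
  have h_split : t ^ B = t ^ (B - A) * t ^ A := by
    rw [← Real.rpow_add ht, sub_add_cancel]
  have h_le := h t ht_one
  have h_lt : C * t ^ A < t ^ (B - A) * t ^ A :=
    mul_lt_mul_of_pos_right ht_big (Real.rpow_pos_of_pos ht A)
  linarith

lemma prod_rpow_rpow_eq_rpow_sum_mul {ι : Type*} [Fintype ι] {t : ℝ} (ht : 0 < t)
    (v c : ι → ℝ) : ∏ i, (t ^ v i) ^ c i = t ^ ∑ i, v i * c i := by
  rw [Real.rpow_sum_of_pos ht]
  exact prod_congr rfl fun i _ => (Real.rpow_mul ht.le _ _).symm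

section SymmetricMean

variable {ι : Type*} [Fintype ι] [DecidableEq ι]

lemma prod_rpow_le_sum_perm {x : ι → ℝ} (hx : ∀ i, 0 ≤ x i) (c : ι → ℝ) :
    ∏ i, x i ^ c i ≤ ∑ σ : Equiv.Perm ι, ∏ i, x (σ i) ^ c i :=
  single_le_sum (f := fun σ : Equiv.Perm ι => ∏ i, x (σ i) ^ c i)
    (fun _ _ => prod_nonneg fun _ _ => Real.rpow_nonneg (hx _) _) (mem_univ 1)

lemma sum_perm_prod_rpow_weight_le {t : ℝ} (ht : 1 ≤ t) {w a : ι → ℝ} (hwa : Monovary w a) :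
    ∑ σ : Equiv.Perm ι, ∏ i, (t ^ w (σ i)) ^ a i
      ≤ (Fintype.card ι).factorial * t ^ ∑ i, w i * a i := by
  calc ∑ σ : Equiv.Perm ι, ∏ i, (t ^ w (σ i)) ^ a i
      = ∑ σ : Equiv.Perm ι, t ^ ∑ i, w (σ i) * a i := by
        simp only [prod_rpow_rpow_eq_rpow_sum_mul (one_pos.trans_le ht)]
    _ ≤ ∑ _σ : Equiv.Perm ι, t ^ ∑ i, w i * a i :=
        sum_le_sum fun σ _ => Real.rpow_le_rpow_of_exponent_le ht hwa.sum_comp_perm_mul_le_sum_mul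
    _ = (Fintype.card ι).factorial * t ^ ∑ i, w i * a i := by
        rw [sum_const, card_univ, Fintype.card_perm, nsmul_eq_mul]

theorem weighted_sum_le_of_sum_perm_prod_rpow_le {w a b : ι → ℝ} (hwa : Monovary w a)
    (hle : ∀ x : ι → ℝ, (∀ i, 0 < x i) →
      ∑ σ : Equiv.Perm ι, ∏ i, x (σ i) ^ b i ≤ ∑ σ : Equiv.Perm ι, ∏ i, x (σ i) ^ a i) :
    ∑ i, w i * b i ≤ ∑ i, w i * a i := by
  refine le_of_forall_rpow_le_mul_rpow (C := (Fintype.card ι).factorial) fun t ht => ?_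
  have ht0 : 0 < t := one_pos.trans ht
  calc t ^ ∑ i, w i * b i = ∏ i, (t ^ w i) ^ b i := (prod_rpow_rpow_eq_rpow_sum_mul ht0 w b).symm
    _ ≤ ∑ σ : Equiv.Perm ι, ∏ i, (t ^ w (σ i)) ^ b i :=
        prod_rpow_le_sum_perm (fun i => (Real.rpow_pos_of_pos ht0 _).le) b
    _ ≤ ∑ σ : Equiv.Perm ι, ∏ i, (t ^ w (σ i)) ^ a i :=
        hle (fun i => t ^ w i) fun i => Real.rpow_pos_of_pos ht0 _
    _ ≤ _ := sum_perm_prod_rpow_weight_le ht.le hwa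

end SymmetricMean

theorem stmt_11_general (n : ℕ) (a b : Fin n → ℝ)
    (ha : Antitone a)
    (hle : ∀ x : Fin n → ℝ, (∀ i, 0 < x i) →
      (1 / (Nat.factorial n : ℝ)) * ∑ σ : Equiv.Perm (Fin n), ∏ i, x (σ i) ^ b i
        ≤ (1 / (Nat.factorial n : ℝ)) * ∑ σ : Equiv.Perm (Fin n), ∏ i, x (σ i) ^ a i) :
    (∀ k : ℕ, k < n →
      ∑ i ∈ Finset.univ.filter (fun i : Fin n => (i : ℕ) < k), b i
        ≤ ∑ i ∈ Finset.univ.filter (fun i : Fin n => (i : ℕ) < k), a i)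
      ∧ ∑ i, b i = ∑ i, a i := by
  have hsum_le := fun x hx => le_of_mul_le_mul_left (hle x hx) (by positivity)
  refine ⟨fun k _ => ?_, le_antisymm ?_ ?_⟩
  · have hw : Antitone fun i : Fin n => if (i : ℕ) < k then (1 : ℝ) else 0 := fun i j hij => by
      by_cases hj : (j : ℕ) < k
      · simp [hj, show (i : ℕ) < k from lt_of_le_of_lt hij hj]
      · simp only [hj, if_false]; split_ifs <;> norm_num
    simpa [sum_filter] using weighted_sum_le_of_sum_perm_prod_rpow_le (hw.monovary ha) hsum_le
  · simpa using weighted_sum_le_of_sum_perm_prod_rpow_le (monovary_const_left a 1) hsum_le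
  · simpa using weighted_sum_le_of_sum_perm_prod_rpow_le (monovary_const_left a (-1)) hsum_le

theorem stmt_11 (n : ℕ) (a b : Fin n → ℝ)
    (ha0 : ∀ i, 0 ≤ a i) (hb0 : ∀ i, 0 ≤ b i)
    (ha : Antitone a) (hb : Antitone b) (hne : b ≠ a)
    (hle : ∀ x : Fin n → ℝ, (∀ i, 0 < x i) →
      (1 / (Nat.factorial n : ℝ)) * ∑ σ : Equiv.Perm (Fin n), ∏ i, x (σ i) ^ b i
        ≤ (1 / (Nat.factorial n : ℝ)) * ∑ σ : Equiv.Perm (Fin n), ∏ i, x (σ i) ^ a i) :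
    (∀ k : ℕ, k < n →
      ∑ i ∈ Finset.univ.filter (fun i : Fin n => (i : ℕ) < k), b i
        ≤ ∑ i ∈ Finset.univ.filter (fun i : Fin n => (i : ℕ) < k), a i)
      ∧ ∑ i, b i = ∑ i, a i :=
  stmt_11_general n a b ha hle
end

section
/- Let (u₁,…,uₙ) and (v₁,…,vₙ) be decreasing sequences of positive real numbers such that u_{i₀} ≠ v_{i₀} for some i₀ ∈ {1,…,n}, and such that Π_{i=1}^j v_i ≤ Π_{i=1}^j u_i for all j ∈ {1,…,n}. Then Σ_{i=1}^n v_i < Σ_{i=1}^n u_i. -/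
/-!
Put `dᵢ = log (uᵢ / vᵢ)`. The product hypothesis says that every partial sum of the `dᵢ` is
nonnegative, so Abel summation against the decreasing nonnegative weights `vᵢ` gives
`0 ≤ ∑ vᵢ dᵢ`. On the other hand `log x ≤ x - 1`, strictly for `x ≠ 1`, yields
`vᵢ dᵢ ≤ uᵢ - vᵢ`, strictly where `uᵢ ≠ vᵢ`. Summing, `0 < ∑ (uᵢ - vᵢ)`.
-/

open Finset Real

theorem mul_log_div_le_sub {u v : ℝ} (hu : 0 < u) (hv : 0 < v) :
    v * log (u / v) ≤ u - v := by
  calc v * log (u / v) ≤ v * (u / v - 1) :=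
        mul_le_mul_of_nonneg_left (log_le_sub_one_of_pos (div_pos hu hv)) hv.le
    _ = u - v := by field_simp

theorem mul_log_div_lt_sub {u v : ℝ} (hu : 0 < u) (hv : 0 < v) (huv : u ≠ v) :
    v * log (u / v) < u - v := by
  have hne : u / v ≠ 1 := fun h => huv ((div_eq_one_iff_eq hv.ne').mp h)
  calc v * log (u / v) < v * (u / v - 1) :=
        mul_lt_mul_of_pos_left (log_lt_sub_one_of_pos (div_pos hu hv) hne) hv
    _ = u - v := by field_simp

theorem sum_range_mul_nonneg_of_antitoneOn {R : Type*} [CommRing R] [PartialOrder R]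
    [IsOrderedRing R] {n : ℕ} {f g : ℕ → R}
    (hf : AntitoneOn f (Set.Iio n)) (hf0 : ∀ i < n, 0 ≤ f i)
    (hg : ∀ j ≤ n, 0 ≤ ∑ i ∈ range j, g i) :
    0 ≤ ∑ i ∈ range n, f i * g i := by
  cases n with
  | zero => simp
  | succ n =>
    simp_rw [← smul_eq_mul (a := f _)]
    rw [sum_range_by_parts, Nat.add_sub_cancel, sub_nonneg]
    calc ∑ i ∈ range n, (f (i + 1) - f i) • ∑ k ∈ range (i + 1), g k
        ≤ 0 := sum_nonpos fun i hi => by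
          have hi : i < n := mem_range.mp hi
          refine mul_nonpos_of_nonpos_of_nonneg ?_ (hg (i + 1) (by omega))
          exact sub_nonpos.mpr (hf (by simp; omega) (by simp; omega) (Nat.le_succ i))
      _ ≤ f n • ∑ k ∈ range (n + 1), g k := mul_nonneg (hf0 n (by omega)) (hg _ le_rfl)

theorem sum_range_lt_of_prod_range_le {n : ℕ} {u v : ℕ → ℝ}
    (hu0 : ∀ i < n, 0 < u i) (hv0 : ∀ i < n, 0 < v i) (hv : AntitoneOn v (Set.Iio n))
    (hne : ∃ i < n, u i ≠ v i)
    (hprod : ∀ j ≤ n, ∏ i ∈ range j, v i ≤ ∏ i ∈ range j, u i) :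
    ∑ i ∈ range n, v i < ∑ i ∈ range n, u i := by
  have hpartial : ∀ j ≤ n, 0 ≤ ∑ i ∈ range j, log (u i / v i) := fun j hj => by
    have hlt : ∀ i ∈ range j, i < n := fun i hi => (mem_range.mp hi).trans_le hj
    rw [← log_prod fun i hi => (div_pos (hu0 i (hlt i hi)) (hv0 i (hlt i hi))).ne',
      prod_div_distrib]
    exact log_nonneg ((one_le_div (prod_pos fun i hi => hv0 i (hlt i hi))).mpr (hprod j hj))
  have habel : 0 ≤ ∑ i ∈ range n, v i * log (u i / v i) :=
    sum_range_mul_nonneg_of_antitoneOn hv (fun i hi => (hv0 i hi).le) hpartial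
  obtain ⟨i₀, hi₀, hne₀⟩ := hne
  have hlt : ∑ i ∈ range n, v i * log (u i / v i) < ∑ i ∈ range n, (u i - v i) :=
    sum_lt_sum
      (fun i hi => mul_log_div_le_sub (hu0 i (mem_range.mp hi)) (hv0 i (mem_range.mp hi)))
      ⟨i₀, mem_range.mpr hi₀, mul_log_div_lt_sub (hu0 i₀ hi₀) (hv0 i₀ hi₀) hne₀⟩
  linarith [sum_sub_distrib (s := range n) u v]

theorem Fin.prod_filter_val_lt {M : Type*} [CommMonoid M] {n j : ℕ} (hj : j ≤ n) (f : ℕ → M) :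
    ∏ i ∈ univ.filter (fun i : Fin n => (i : ℕ) < j), f i = ∏ k ∈ range j, f k := by
  refine (prod_map _ Fin.valEmbedding f).symm.trans (congrArg (∏ k ∈ ·, f k) ?_)
  ext k
  simp only [mem_map, mem_filter, mem_univ, true_and, Fin.valEmbedding_apply, mem_range]
  exact ⟨fun ⟨i, hi, hik⟩ => hik ▸ hi, fun hk => ⟨⟨k, hk.trans_le hj⟩, hk, rfl⟩⟩

theorem stmt_12_general (n : ℕ) (u v : Fin n → ℝ)
    (hu0 : ∀ i, 0 < u i) (hv0 : ∀ i, 0 < v i)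
    (hv : Antitone v)
    (hne : ∃ i, u i ≠ v i)
    (hprod : ∀ j : ℕ, j ≤ n →
      ∏ i ∈ Finset.univ.filter (fun i : Fin n => (i : ℕ) < j), v i
        ≤ ∏ i ∈ Finset.univ.filter (fun i : Fin n => (i : ℕ) < j), u i) :
    ∑ i, v i < ∑ i, u i := by
  let extend (w : Fin n → ℝ) (k : ℕ) : ℝ := if h : k < n then w ⟨k, h⟩ else 0
  have extend_val (w : Fin n → ℝ) (i : Fin n) : extend w i = w i := dif_pos i.isLt
  have extend_of_lt (w : Fin n → ℝ) {k : ℕ} (hk : k < n) : extend w k = w ⟨k, hk⟩ := dif_pos hk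
  simp only [← extend_val u, ← extend_val v, Fin.sum_univ_eq_sum_range (extend _)] at hprod ⊢
  obtain ⟨i₀, hne₀⟩ := hne
  refine sum_range_lt_of_prod_range_le (fun k hk => ?_) (fun k hk => ?_) (fun a ha b hb hab => ?_)
    ⟨i₀, i₀.isLt, by rwa [extend_val, extend_val]⟩ (fun j hj => ?_)
  · exact (extend_of_lt u hk).symm ▸ hu0 _
  · exact (extend_of_lt v hk).symm ▸ hv0 _
  · rw [extend_of_lt v ha, extend_of_lt v hb]
    exact hv hab
  · simpa only [Fin.prod_filter_val_lt hj] using hprod j hj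

theorem stmt_12 (n : ℕ) (u v : Fin n → ℝ)
    (hu0 : ∀ i, 0 < u i) (hv0 : ∀ i, 0 < v i)
    (hu : Antitone u) (hv : Antitone v)
    (hne : ∃ i, u i ≠ v i)
    (hprod : ∀ j : ℕ, j ≤ n →
      ∏ i ∈ Finset.univ.filter (fun i : Fin n => (i : ℕ) < j), v i
        ≤ ∏ i ∈ Finset.univ.filter (fun i : Fin n => (i : ℕ) < j), u i) :
    ∑ i, v i < ∑ i, u i :=
  stmt_12_general n u v hu0 hv0 hv hne hprod
end

section
/- Let x = (x₁,…,xₙ) and y = (y₁,…,yₙ) be decreasing vectors of nonnegative real numbers. Then y is majorized by x (i.e., Σ_{i=1}^k y_i ≤ Σ_{i=1}^k x_i for all k ∈ {1,…,n−1} and Σ_{i=1}^n y_i = Σ_{i=1}^n x_i) if and only if y lies in the permutohedron K_{Sₙ}(x), the convex hull in ℝⁿ of the set {σx : σ ∈ Sₙ}, where (σx)_i = x_{σ⁻¹(i)}. -/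
/-!
Both conditions on `y` are linear inequalities, so they cut out a convex set; it contains every
rearrangement `σx` because, `x` being decreasing, a permutation can only lower its prefix sums
(rearrangement inequality). Hence it contains the permutohedron.

Conversely, if `y` lay outside the permutohedron, some vector `c` would separate them
(Hahn–Banach). Sort `c` decreasingly by a permutation `π`. Since `y` is decreasing,
`c ⬝ᵥ y ≤ ∑ c (π i) y i` by the rearrangement inequality, and summation by parts against the
prefix sums bounds this by `∑ c (π i) x i = c ⬝ᵥ π⁻¹x`, contradicting the separation.
-/

open Finset

theorem Finset.sum_range_mul_le_sum_range_mul_of_antitoneOn {d x y : ℕ → ℝ} {n : ℕ}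
    (hd : AntitoneOn d (Set.Iio n))
    (hprefix : ∀ k < n, ∑ i ∈ range k, y i ≤ ∑ i ∈ range k, x i)
    (htotal : ∑ i ∈ range n, y i = ∑ i ∈ range n, x i) :
    ∑ i ∈ range n, d i * y i ≤ ∑ i ∈ range n, d i * x i := by
  -- By parts, the difference is `∑ (d i - d (i + 1)) * (prefix sum of x - y)`, termwise `≥ 0`.
  have hby_parts := sum_range_by_parts d (fun i => x i - y i) n
  simp only [smul_eq_mul, sum_sub_distrib, htotal, sub_self, mul_zero, zero_sub] at hby_parts
  rw [← sub_nonneg, ← sum_sub_distrib]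
  simp_rw [← mul_sub]
  rw [hby_parts, neg_nonneg]
  refine sum_nonpos fun i hi => ?_
  have hi : i + 1 < n := by rw [mem_range] at hi; omega
  exact mul_nonpos_of_nonpos_of_nonneg
    (sub_nonpos.2 (hd (by simp; omega) hi i.le_succ)) (sub_nonneg.2 (hprefix _ hi))

theorem Fin.sum_filter_val_lt {M : Type*} [AddCommMonoid M] {n k : ℕ} (g : ℕ → M) (hk : k ≤ n) :
    ∑ i ∈ univ.filter (fun i : Fin n => (i : ℕ) < k), g i = ∑ i ∈ range k, g i := by
  calc _ = ∑ i ∈ (univ.filter (fun i : Fin n => (i : ℕ) < k)).map Fin.valEmbedding, g i :=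
        (sum_map _ Fin.valEmbedding g).symm
    _ = _ := by
      congr 1
      ext j
      simp only [mem_map, mem_filter, mem_univ, true_and, Fin.valEmbedding_apply, mem_range]
      exact ⟨fun ⟨i, hi, hij⟩ => hij ▸ hi, fun hj => ⟨⟨j, by omega⟩, hj, rfl⟩⟩

theorem Fin.exists_eq_comp_val {α : Type*} [Nonempty α] {n : ℕ} (f : Fin n → α) :
    ∃ g : ℕ → α, f = g ∘ Fin.val :=
  ⟨Function.extend Fin.val f (fun _ => Classical.arbitrary α),
    funext fun i => (Fin.val_injective.extend_apply f _ i).symm⟩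

theorem isLinearMap_sum_apply {ι : Type*} (s : Finset ι) :
    IsLinearMap ℝ fun y : ι → ℝ => ∑ i ∈ s, y i :=
  ⟨fun _ _ => sum_add_distrib, fun _ _ => by simp [mul_sum]⟩

theorem mem_convexHull_of_forall_exists_dotProduct_le {ι : Type*} [Fintype ι]
    {s : Set (ι → ℝ)} (hs : s.Finite) {y : ι → ℝ}
    (h : ∀ c : ι → ℝ, ∃ z ∈ s, c ⬝ᵥ y ≤ c ⬝ᵥ z) : y ∈ convexHull ℝ s := by
  classical
  by_contra hy
  obtain ⟨f, u, hfs, hfy⟩ :=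
    geometric_hahn_banach_closed_point (convex_convexHull ℝ s) (hs.isClosed_convexHull ℝ) hy
  set c : ι → ℝ := fun i => f fun j => if i = j then 1 else 0
  have hf (z : ι → ℝ) : f z = c ⬝ᵥ z := by
    simpa [dotProduct, mul_comm] using (f : (ι → ℝ) →ₗ[ℝ] ℝ).pi_apply_eq_sum_univ z
  obtain ⟨z, hz, hyz⟩ := h c
  have hfz := hfs z (subset_convexHull ℝ s hz)
  rw [hf] at hfz hfy
  linarith

section Majorization

variable {n : ℕ}

noncomputable def prefixSum (x : Fin n → ℝ) (k : ℕ) : ℝ :=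
  ∑ i ∈ univ.filter (fun i : Fin n => (i : ℕ) < k), x i

def IsMajorizedBy (y x : Fin n → ℝ) : Prop :=
  (∀ k < n, prefixSum y k ≤ prefixSum x k) ∧ ∑ i, y i = ∑ i, x i

theorem prefixSum_eq_sum_mul (x : Fin n → ℝ) (k : ℕ) :
    prefixSum x k = ∑ i : Fin n, (if (i : ℕ) < k then 1 else 0) * x i := by
  simp only [prefixSum, sum_filter, boole_mul]

theorem antitone_ite_val_lt (k : ℕ) :
    Antitone fun i : Fin n => if (i : ℕ) < k then (1 : ℝ) else 0 := by
  intro i j hij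
  have : (i : ℕ) ≤ j := hij
  dsimp only
  split_ifs <;> first | (exfalso; omega) | norm_num

theorem prefixSum_comp_perm_le {x : Fin n → ℝ} (hx : Antitone x) (σ : Equiv.Perm (Fin n))
    (k : ℕ) :
    prefixSum (x ∘ σ) k ≤ prefixSum x k := by
  rw [prefixSum_eq_sum_mul, prefixSum_eq_sum_mul]
  exact ((antitone_ite_val_lt k).monovary hx).sum_mul_comp_perm_le_sum_mul

theorem isMajorizedBy_comp_perm {x : Fin n → ℝ} (hx : Antitone x) (σ : Equiv.Perm (Fin n)) :
    IsMajorizedBy (x ∘ σ) x :=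
  ⟨fun k _ => prefixSum_comp_perm_le hx σ k, Equiv.sum_comp σ x⟩

theorem convex_setOf_isMajorizedBy (x : Fin n → ℝ) : Convex ℝ {y | IsMajorizedBy y x} := by
  simp only [IsMajorizedBy, Set.ofPred_and, Set.ofPred_forall]
  exact (convex_iInter₂ fun k _ => convex_halfSpace_le (isLinearMap_sum_apply _) _).inter
    (convex_hyperplane (isLinearMap_sum_apply _) _)

theorem IsMajorizedBy.sum_mul_le {x y d : Fin n → ℝ} (h : IsMajorizedBy y x) (hd : Antitone d) :
    ∑ i, d i * y i ≤ ∑ i, d i * x i := by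
  obtain ⟨D, rfl⟩ := Fin.exists_eq_comp_val d
  obtain ⟨X, rfl⟩ := Fin.exists_eq_comp_val x
  obtain ⟨Y, rfl⟩ := Fin.exists_eq_comp_val y
  obtain ⟨hprefix, htotal⟩ := h
  simp only [Function.comp_apply, Fin.sum_univ_eq_sum_range (fun i => D i * Y i),
    Fin.sum_univ_eq_sum_range (fun i => D i * X i)]
  refine sum_range_mul_le_sum_range_mul_of_antitoneOn
    (fun a ha b hb hab => @hd ⟨a, ha⟩ ⟨b, hb⟩ hab) (fun k hk => ?_) ?_
  · simpa [prefixSum, Fin.sum_filter_val_lt _ hk.le] using hprefix k hk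
  · simpa [Fin.sum_univ_eq_sum_range] using htotal

theorem IsMajorizedBy.exists_perm_dotProduct_le {x y : Fin n → ℝ} (h : IsMajorizedBy y x)
    (hy : Antitone y) (c : Fin n → ℝ) : ∃ σ : Equiv.Perm (Fin n), c ⬝ᵥ y ≤ c ⬝ᵥ (x ∘ ⇑σ⁻¹) := by
  set π := Tuple.sort (OrderDual.toDual ∘ c)
  have hcπ : Antitone (c ∘ π) := Tuple.monotone_sort (OrderDual.toDual ∘ c)
  refine ⟨π, ?_⟩
  calc c ⬝ᵥ y = ∑ i, c (π i) * y (π i) := (Equiv.sum_comp π fun i => c i * y i).symm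
    _ ≤ ∑ i, c (π i) * y i := (hcπ.monovary hy).sum_mul_comp_perm_le_sum_mul
    _ ≤ ∑ i, c (π i) * x i := h.sum_mul_le hcπ
    _ = c ⬝ᵥ (x ∘ ⇑π⁻¹) := by
      rw [dotProduct, ← Equiv.sum_comp π fun i => c i * (x ∘ ⇑π⁻¹) i]
      simp

end Majorization

theorem stmt_13_general (n : ℕ) (x y : Fin n → ℝ)
    (hx : Antitone x) (hy : Antitone y) :
    ((∀ k : ℕ, k < n →
        ∑ i ∈ Finset.univ.filter (fun i : Fin n => (i : ℕ) < k), y i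
          ≤ ∑ i ∈ Finset.univ.filter (fun i : Fin n => (i : ℕ) < k), x i)
      ∧ ∑ i, y i = ∑ i, x i)
    ↔ y ∈ convexHull ℝ
        {z : Fin n → ℝ | ∃ σ : Equiv.Perm (Fin n), z = fun i => x (σ⁻¹ i)} := by
  change IsMajorizedBy y x ↔ _
  constructor
  · intro h
    refine mem_convexHull_of_forall_exists_dotProduct_le ?_ fun c => ?_
    · exact (Set.finite_range fun σ : Equiv.Perm (Fin n) => x ∘ ⇑σ⁻¹).subset
        fun _ ⟨σ, hσ⟩ => ⟨σ, hσ.symm⟩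
    · obtain ⟨σ, hσ⟩ := h.exists_perm_dotProduct_le hy c
      exact ⟨_, ⟨σ, rfl⟩, hσ⟩
  · refine fun hmem => convexHull_min ?_ (convex_setOf_isMajorizedBy x) hmem
    rintro _ ⟨σ, rfl⟩
    exact isMajorizedBy_comp_perm hx σ⁻¹

theorem stmt_13 (n : ℕ) (x y : Fin n → ℝ)
    (hx0 : ∀ i, 0 ≤ x i) (hy0 : ∀ i, 0 ≤ y i)
    (hx : Antitone x) (hy : Antitone y) :
    ((∀ k : ℕ, k < n →
        ∑ i ∈ Finset.univ.filter (fun i : Fin n => (i : ℕ) < k), y i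
          ≤ ∑ i ∈ Finset.univ.filter (fun i : Fin n => (i : ℕ) < k), x i)
      ∧ ∑ i, y i = ∑ i, x i)
    ↔ y ∈ convexHull ℝ
        {z : Fin n → ℝ | ∃ σ : Equiv.Perm (Fin n), z = fun i => x (σ⁻¹ i)} :=
  stmt_13_general n x y hx hy
end

section
/- (Rado's inequality.) Let G be a subgroup of the symmetric group Sₙ, let a ∈ ℝⁿ be a nonnegative vector, and let K_G(a) be the convex hull in ℝⁿ of the finite set {γa : γ ∈ G}, where (γa)_i = a_{γ⁻¹(i)}. If b ∈ K_G(a), then [x^b]_G ≤ [x^a]_G for every positive vector x ∈ ℝⁿ. -/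
/-!
Each monomial `c ↦ ∏ i, y i ^ c i` with `y > 0` is `exp` of a linear form in `c`, hence convex,
so the `G`-symmetric sum `c ↦ ∑ σ ∈ G, ∏ i, x (σ i) ^ c i` is convex. It takes the same value at
every `γ • a` with `γ ∈ G` (reindex the sum by `σ ↦ σ γ`), so by the maximum principle for convex
functions on a convex hull it is at most its value at `a` on all of `K_G(a)`.
-/

open Real

lemma ConvexOn.sum {ι E : Type*} [AddCommMonoid E] [Module ℝ E] {s : Set E}
    (hs : Convex ℝ s) (t : Finset ι) {f : ι → E → ℝ} (hf : ∀ i ∈ t, ConvexOn ℝ s (f i)) :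
    ConvexOn ℝ s (fun z => ∑ i ∈ t, f i z) := by
  have h := Finset.sum_induction f (ConvexOn ℝ s) (fun _ _ => ConvexOn.add) (convexOn_const 0 hs) hf
  rwa [Finset.sum_fn] at h

lemma convexOn_prod_rpow {ι : Type*} [Fintype ι] {y : ι → ℝ} (hy : ∀ i, 0 < y i) :
    ConvexOn ℝ Set.univ (fun c : ι → ℝ => ∏ i, y i ^ c i) := by
  let L : (ι → ℝ) →ₗ[ℝ] ℝ := ∑ i, log (y i) • LinearMap.proj i
  have hexp : ∀ c, ∏ i, y i ^ c i = exp (L c) := fun c => by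
    simp [L, exp_sum, rpow_def_of_pos (hy _), mul_comm]
  have h := convexOn_exp.comp_linearMap L
  rw [Set.preimage_univ] at h
  simp_rw [hexp]
  exact h

lemma sum_prod_rpow_comp_inv {α : Type*} [Fintype α] (G : Subgroup (Equiv.Perm α)) [Fintype G]
    (x c : α → ℝ) {γ : Equiv.Perm α} (hγ : γ ∈ G) :
    ∑ σ : G, ∏ i, x ((σ : Equiv.Perm α) i) ^ c (γ⁻¹ i)
      = ∑ σ : G, ∏ i, x ((σ : Equiv.Perm α) i) ^ c i := by
  refine Fintype.sum_equiv (Equiv.mulRight ⟨γ, hγ⟩) _ _ fun σ => ?_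
  exact Fintype.prod_equiv γ⁻¹ _ _ fun i => by simp

theorem stmt_14_general (n : ℕ) (G : Subgroup (Equiv.Perm (Fin n))) [DecidablePred (· ∈ G)]
    (a b : Fin n → ℝ)
    (hb : b ∈ convexHull ℝ
      {z : Fin n → ℝ | ∃ γ ∈ G, z = fun i => a (γ⁻¹ i)})
    (x : Fin n → ℝ) (hx : ∀ i, 0 < x i) :
    (1 / (Fintype.card G : ℝ)) * ∑ σ : G, ∏ i, x ((σ : Equiv.Perm (Fin n)) i) ^ b i
      ≤ (1 / (Fintype.card G : ℝ)) * ∑ σ : G, ∏ i, x ((σ : Equiv.Perm (Fin n)) i) ^ a i := by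
  have hconv : ConvexOn ℝ Set.univ
      (fun c : Fin n → ℝ => ∑ σ : G, ∏ i, x ((σ : Equiv.Perm (Fin n)) i) ^ c i) :=
    ConvexOn.sum convex_univ _ fun σ _ => convexOn_prod_rpow fun _ => hx _
  obtain ⟨_, ⟨γ, hγ, rfl⟩, hmax⟩ := hconv.exists_ge_of_mem_convexHull (Set.subset_univ _) hb
  rw [sum_prod_rpow_comp_inv G x a hγ] at hmax
  gcongr

theorem stmt_14 (n : ℕ) (G : Subgroup (Equiv.Perm (Fin n))) [DecidablePred (· ∈ G)]
    (a b : Fin n → ℝ) (ha : ∀ i, 0 ≤ a i)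
    (hb : b ∈ convexHull ℝ
      {z : Fin n → ℝ | ∃ γ ∈ G, z = fun i => a (γ⁻¹ i)})
    (x : Fin n → ℝ) (hx : ∀ i, 0 < x i) :
    (1 / (Fintype.card G : ℝ)) * ∑ σ : G, ∏ i, x ((σ : Equiv.Perm (Fin n)) i) ^ b i
      ≤ (1 / (Fintype.card G : ℝ)) * ∑ σ : G, ∏ i, x ((σ : Equiv.Perm (Fin n)) i) ^ a i :=
  stmt_14_general n G a b hb x hx
end

section
/- (Converse of Rado's inequality.) Let G be a subgroup of the symmetric group Sₙ and let a, b ∈ ℝⁿ be nonnegative vectors. If [x^b]_G ≤ [x^a]_G for every positive vector x ∈ ℝⁿ, then b belongs to K_G(a), the convex hull in ℝⁿ of the set {γa : γ ∈ G}, where (γa)_i = a_{γ⁻¹(i)}. -/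
/-!
If `b` were outside the convex hull of the orbit `G • a`, a linear functional `c` would separate
them: `⟨c, γ a⟩ < u < ⟨c, b⟩` for all `γ ∈ G`. At the point `x = exp (t c)` every monomial is an
exponential, `∏ᵢ x_{σ i} ^ wᵢ = exp (t ⟨c, σ⁻¹ w⟩)`, so the sum for `b` is at least its identity
term `exp (t ⟨c, b⟩)`, while the sum for `a` is at most `|G| exp (t u)`. For `t` large the first
exceeds the second, contradicting the hypothesis.
-/

open Finset Real Matrix

section

variable {ι : Type*} [Fintype ι]

theorem exists_dotProduct_lt_of_notMem_convexHull {S : Set (ι → ℝ)} (hS : S.Finite)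
    {b : ι → ℝ} (hb : b ∉ convexHull ℝ S) :
    ∃ (c : ι → ℝ) (u : ℝ), (∀ z ∈ S, c ⬝ᵥ z < u) ∧ u < c ⬝ᵥ b := by
  classical
  obtain ⟨f, u, hS_lt, hb_gt⟩ := geometric_hahn_banach_closed_point (convex_convexHull ℝ S)
    (hS.isCompact_convexHull (𝕜 := ℝ)).isClosed hb
  set c := (dotProductEquiv ℝ ι).symm (f : Module.Dual ℝ (ι → ℝ))
  have hf : ∀ x, f x = c ⬝ᵥ x := fun x => by
    rw [← dotProductEquiv_apply_apply, LinearEquiv.apply_symm_apply]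
    rfl
  exact ⟨c, u, fun z hz => hf z ▸ hS_lt z (subset_convexHull ℝ S hz), hf b ▸ hb_gt⟩

theorem finite_setOf_comp_perm_inv (P : Set (Equiv.Perm ι)) (a : ι → ℝ) :
    {z : ι → ℝ | ∃ γ ∈ P, z = fun i => a (γ⁻¹ i)}.Finite :=
  (Set.finite_range fun γ : Equiv.Perm ι => fun i => a (γ⁻¹ i)).subset
    fun _ ⟨γ, _, hz⟩ => ⟨γ, hz.symm⟩

theorem prod_exp_mul_rpow (t : ℝ) (c w : ι → ℝ) (σ : Equiv.Perm ι) :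
    ∏ i, exp (t * c (σ i)) ^ w i = exp (t * (c ⬝ᵥ fun i => w (σ⁻¹ i))) := by
  simp_rw [← exp_mul, ← exp_sum]
  rw [dotProduct_comm, dotProduct, mul_sum]
  exact congrArg exp <| Fintype.sum_equiv σ _ _ fun i => by
    simp only [Equiv.Perm.coe_inv, Equiv.symm_apply_apply]; ring

variable [DecidableEq ι] (G : Subgroup (Equiv.Perm ι)) [DecidablePred (· ∈ G)]

theorem exp_mul_dotProduct_le_sum_prod_rpow (t : ℝ) (c w : ι → ℝ) :
    exp (t * (c ⬝ᵥ w)) ≤ ∑ σ : G, ∏ i, exp (t * c ((σ : Equiv.Perm ι) i)) ^ w i :=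
  calc exp (t * (c ⬝ᵥ w)) = ∏ i, exp (t * c (((1 : G) : Equiv.Perm ι) i)) ^ w i := by
        rw [prod_exp_mul_rpow]; rfl
  _ ≤ _ := single_le_sum (f := fun σ : G => ∏ i, exp (t * c ((σ : Equiv.Perm ι) i)) ^ w i)
        (fun _ _ => by positivity) (mem_univ 1)

theorem sum_prod_rpow_le_card_mul_exp {t u : ℝ} (ht : 0 ≤ t) (c w : ι → ℝ)
    (hw : ∀ γ ∈ G, (c ⬝ᵥ fun i => w (γ⁻¹ i)) ≤ u) :
    ∑ σ : G, ∏ i, exp (t * c ((σ : Equiv.Perm ι) i)) ^ w i ≤ Fintype.card G * exp (t * u) :=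
  calc _ ≤ ∑ _σ : G, exp (t * u) := sum_le_sum fun σ _ => by
        rw [prod_exp_mul_rpow]; gcongr; exact hw σ σ.2
  _ = _ := by simp

end

theorem stmt_15_general (n : ℕ) (G : Subgroup (Equiv.Perm (Fin n))) [DecidablePred (· ∈ G)]
    (a b : Fin n → ℝ)
    (hle : ∀ x : Fin n → ℝ, (∀ i, 0 < x i) →
      (1 / (Fintype.card G : ℝ)) * ∑ σ : G, ∏ i, x ((σ : Equiv.Perm (Fin n)) i) ^ b i
        ≤ (1 / (Fintype.card G : ℝ)) * ∑ σ : G, ∏ i, x ((σ : Equiv.Perm (Fin n)) i) ^ a i) :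
    b ∈ convexHull ℝ
      {z : Fin n → ℝ | ∃ γ ∈ G, z = fun i => a (γ⁻¹ i)} := by
  by_contra hb_notin
  obtain ⟨c, u, ha_lt, hu_lt⟩ :=
    exists_dotProduct_lt_of_notMem_convexHull (finite_setOf_comp_perm_inv (G : Set _) a) hb_notin
  set N : ℝ := (Fintype.card G : ℝ)
  have hN : 0 < N := Nat.cast_pos.2 Fintype.card_pos
  set t := N / (c ⬝ᵥ b - u)
  have ht : 0 < t := div_pos hN (sub_pos.2 hu_lt)
  have htN : t * (c ⬝ᵥ b - u) = N := div_mul_cancel₀ N (sub_pos.2 hu_lt).ne'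
  have hsum := hle (fun i => exp (t * c i)) fun i => exp_pos _
  rw [mul_le_mul_iff_right₀ (by positivity)] at hsum
  have hlower := exp_mul_dotProduct_le_sum_prod_rpow G t c b
  have hupper := sum_prod_rpow_le_card_mul_exp G ht.le c a fun γ hγ => (ha_lt _ ⟨γ, hγ, rfl⟩).le
  have : N * exp (t * u) < exp (t * (c ⬝ᵥ b)) :=
    calc N * exp (t * u) < exp N * exp (t * u) := by gcongr; linarith [add_one_le_exp N]
    _ = exp (t * (c ⬝ᵥ b)) := by
      rw [← exp_add]; congr 1; linear_combination -htN
  exact lt_irrefl _ (this.trans_le (hlower.trans (hsum.trans hupper)))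

theorem stmt_15 (n : ℕ) (G : Subgroup (Equiv.Perm (Fin n))) [DecidablePred (· ∈ G)]
    (a b : Fin n → ℝ) (ha : ∀ i, 0 ≤ a i) (hb : ∀ i, 0 ≤ b i)
    (hle : ∀ x : Fin n → ℝ, (∀ i, 0 < x i) →
      (1 / (Fintype.card G : ℝ)) * ∑ σ : G, ∏ i, x ((σ : Equiv.Perm (Fin n)) i) ^ b i
        ≤ (1 / (Fintype.card G : ℝ)) * ∑ σ : G, ∏ i, x ((σ : Equiv.Perm (Fin n)) i) ^ a i) :
    b ∈ convexHull ℝ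
      {z : Fin n → ℝ | ∃ γ ∈ G, z = fun i => a (γ⁻¹ i)} :=
  stmt_15_general n G a b hle
end
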